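/- Let b_1 ≥ 1, b_2 ≥ 0, a ≥ 0 with a + b_2 ≥ 1, and let w be any binary word of length a + b_2 - 1 containing exactly a - 2 ones (so a ≥ 2). Then 3·(value of 0^{b_1 + 1} 1^a 0^{b_2}) < 2·(value of 0^{b_1} 11 w), where both words have length b_1 + 1 + a + b_2. -/
import Mathlib


/-- Base-2 value of a binary word (most significant bit first). -/
def val (w : List Bool) : ℕ :=
  w.foldl (fun n b => 2 * n + b.toNat) 0

lemma val_foldl (u : List Bool) (n : ℕ) :
    u.foldl (fun n b => 2 * n + b.toNat) n =
      n * 2 ^ u.length + u.foldl (fun n b => 2 * n + b.toNat) 0 := by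
  induction u generalizing n with
  | nil => simp
  | cons b t ih =>
    simp only [List.foldl_cons, List.length_cons]
    rw [ih, ih (2 * 0 + b.toNat), pow_succ]
    ring

lemma val_append (u v : List Bool) : val (u ++ v) = val u * 2 ^ v.length + val v := by
  unfold val
  rw [List.foldl_append, val_foldl]

lemma val_replicate_false (n : ℕ) : val (List.replicate n false) = 0 := by
  induction n with
  | zero => rfl
  | succ k ih =>
    rw [List.replicate_succ]
    unfold val at *
    show List.foldl _ (2 * 0 + false.toNat) _ = 0
    simpa using ih

lemma val_replicate_true (n : ℕ) : val (List.replicate n true) = 2 ^ n - 1 := by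
  induction n with
  | zero => rfl
  | succ k ih =>
    rw [List.replicate_succ]
    unfold val at *
    rw [List.foldl_cons, val_foldl, ih]
    have : 1 ≤ 2 ^ k := Nat.one_le_two_pow
    simp only [List.length_replicate, Bool.toNat_true, pow_succ]
    omega

theorem stmt10 (b1 b2 a : ℕ) (hb1 : 1 ≤ b1) (hab : 1 ≤ a + b2) (ha : 2 ≤ a)
    (w : List Bool) (hl : w.length = a + b2 - 1) (hc : w.count true = a - 2) :
    3 * val (List.replicate (b1 + 1) false ++ List.replicate a true ++ List.replicate b2 false) <
      2 * val (List.replicate b1 false ++ [true, true] ++ w) := by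
  rw [val_append, val_append, val_append, val_append, val_replicate_false,
    val_replicate_false, val_replicate_false, val_replicate_true]
  have hv2 : val [true, true] = 3 := rfl
  rw [hv2]
  simp only [List.length_replicate, hl, zero_mul, zero_add, add_zero]
  -- goal: 3 * ((2^a - 1) * 2^b2) < 2 * (3 * 2^(a+b2-1) + val w)
  have hsub : (2 ^ a - 1) * 2 ^ b2 = 2 ^ a * 2 ^ b2 - 2 ^ b2 := by
    rw [Nat.sub_mul, one_mul]
  have hPQ : 2 ^ a * 2 ^ b2 = 2 * 2 ^ (a + b2 - 1) := by
    rw [← pow_add, ← pow_succ']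
    congr 1
    omega
  rw [hsub, hPQ]
  have hQ : 1 ≤ 2 ^ b2 := Nat.one_le_two_pow
  have hX : 1 ≤ 2 ^ (a + b2 - 1) := Nat.one_le_two_pow
  omega
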